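/- arXiv:2506.18509 — 2 statements merged into one kernel-verified Lean document; each statement's English description precedes it below -/
import Mathlib

section
/- For fixed n ≥ 1, there is a polynomial P_n with nonnegative integer coefficients and degree 2^{n-1} such that λ(n,ε) = P_n(1/ε) for all ε ∈ (0,1]. -/
noncomputable def lam : ℕ → ℝ → ℝ
  | 0, _ => 0
  | 1, ε => 2 / ε
  | (n+2), ε =>
      (((n+2) * (n+3) : ℕ) : ℝ) / ε + lam (n+1) (ε ^ 2 / (((n+2) * (n+3) : ℕ) : ℝ))

/-! `λ(n, ε)` is a polynomial in `1/ε`: if `λ(n, ε) = P(1/ε)` then, with `c = (n+1)(n+2)`,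
`λ(n+1, ε) = c/ε + P(c/ε²) = (c X + P(c X²))(1/ε)`. Composing with `c X²` doubles the degree and
keeps the coefficients natural numbers, while the added term `c X` has degree 1. -/

open Polynomial

/-- `lamPoly m` is the polynomial `P_{m+1}` with `λ(m+1, ε) = P_{m+1}(1/ε)`. -/
noncomputable def lamPoly : ℕ → ℕ[X]
  | 0 => C 2 * X
  | m + 1 => C ((m + 2) * (m + 3)) * X + (lamPoly m).comp (C ((m + 2) * (m + 3)) * X ^ 2)

theorem natDegree_lamPoly (m : ℕ) : (lamPoly m).natDegree = 2 ^ m := by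
  induction m with
  | zero => simp [lamPoly]
  | succ m ih =>
    have hc : ((m + 2) * (m + 3) : ℕ) ≠ 0 := by positivity
    have hcomp : ((lamPoly m).comp (C ((m + 2) * (m + 3)) * X ^ 2)).natDegree = 2 ^ (m + 1) := by
      rw [natDegree_comp, ih, natDegree_C_mul_X_pow 2 _ hc, pow_succ]
    have hlin : (C ((m + 2) * (m + 3)) * X : ℕ[X]).natDegree < 2 ^ (m + 1) := by
      rw [natDegree_C_mul_X _ hc]
      exact Nat.one_lt_two_pow (Nat.succ_ne_zero m)
    rw [lamPoly, natDegree_add_eq_right_of_natDegree_lt (hcomp ▸ hlin), hcomp]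

-- Valid for every real `ε`: at `ε = 0` both sides are `0`, as `x / 0 = 0` in `ℝ`.
theorem lam_succ_eq_eval_lamPoly (m : ℕ) (ε : ℝ) :
    lam (m + 1) ε = ((lamPoly m).map (Nat.castRingHom ℝ)).eval (1 / ε) := by
  induction m generalizing ε with
  | zero => simp [lam, lamPoly, div_eq_mul_inv, mul_comm]
  | succ m ih =>
    set c : ℝ := (((m + 2) * (m + 3) : ℕ) : ℝ)
    have hinv : 1 / (ε ^ 2 / c) = c * (1 / ε) ^ 2 := by
      rw [one_div_div, div_eq_mul_one_div, one_div_pow]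
    have hlam : lam (m + 2) ε = c / ε + lam (m + 1) (ε ^ 2 / c) := rfl
    rw [hlam, ih, hinv, lamPoly]
    simp only [Polynomial.map_add, Polynomial.map_mul, Polynomial.map_pow, map_comp, map_X,
      eval_add, eval_comp, eval_mul, eval_pow, eval_X, eq_natCast, Polynomial.map_natCast,
      eval_natCast, c]
    ring

theorem stmt2 (n : ℕ) (hn : 1 ≤ n) :
    ∃ P : Polynomial ℝ, (∀ k, ∃ m : ℕ, P.coeff k = (m : ℝ)) ∧
      P.natDegree = 2 ^ (n - 1) ∧
      ∀ ε : ℝ, 0 < ε → ε ≤ 1 → lam n ε = P.eval (1 / ε) := by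
  obtain ⟨m, rfl⟩ := Nat.exists_eq_add_of_le' hn
  refine ⟨(lamPoly m).map (Nat.castRingHom ℝ), fun k => ⟨(lamPoly m).coeff k, by simp⟩, ?_,
    fun ε _ _ => lam_succ_eq_eval_lamPoly m ε⟩
  rw [natDegree_map_eq_of_injective Nat.cast_injective, natDegree_lamPoly, Nat.add_sub_cancel]
end

section
/- Let Q ⊂ ℝ² be a convex body whose projection to the first coordinate is the interval [p₁,p₂] with p₁ < p₂, and let p = λ₁p₁ + λ₂p₂ with λ₁,λ₂ > 0, λ₁+λ₂ = 1. Suppose Q ∩ {x₁ = p} is a segment of length w₀, and the minimum and maximum of the second coordinate on Q are both attained on the line {x₁ = p₂} (or both on {x₁ = p₁}). Then the length of the projection of Q to the second coordinate is at most w₀/min(λ₁,λ₂). -/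
/-!
Suppose the extremes `a`, `b` of the second coordinate lie on the line `x₁ = p₂` and pick `c ∈ Q`
on `x₁ = p₁`. The points `l₁ c + l₂ a` and `l₁ c + l₂ b` lie in `Q` on the line `x₁ = p`, and their
second coordinates differ by `l₂ (b₂ - a₂)`, so `l₂` times the height of `Q` is at most `w₀`.
The case of the line `x₁ = p₁` is symmetric.
-/

open Set

noncomputable def sliceWidth (Q : Set (ℝ × ℝ)) (x : ℝ) : ℝ :=
  sSup (Prod.snd '' {q ∈ Q | q.1 = x}) - sInf (Prod.snd '' {q ∈ Q | q.1 = x})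

lemma IsCompact.snd_image_slice {Q : Set (ℝ × ℝ)} (hQ : IsCompact Q) (x : ℝ) :
    IsCompact (Prod.snd '' {q ∈ Q | q.1 = x}) :=
  (hQ.inter_right (isClosed_singleton.preimage continuous_fst)).image continuous_snd

lemma Convex.mul_sub_snd_le_sliceWidth {Q : Set (ℝ × ℝ)} (hQc : IsCompact Q)
    (hQconv : Convex ℝ Q) {a b c : ℝ × ℝ} (ha : a ∈ Q) (hb : b ∈ Q) (hc : c ∈ Q)
    (hab : a.1 = b.1) {t : ℝ} (ht₀ : 0 ≤ t) (ht₁ : t ≤ 1) :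
    t * (b.2 - a.2) ≤ sliceWidth Q ((1 - t) * c.1 + t * a.1) := by
  set x := (1 - t) * c.1 + t * a.1
  have hu : (1 - t) • c + t • a ∈ {q ∈ Q | q.1 = x} :=
    ⟨hQconv hc ha (by linarith) ht₀ (by ring), by simp [x]⟩
  have hv : (1 - t) • c + t • b ∈ {q ∈ Q | q.1 = x} :=
    ⟨hQconv hc hb (by linarith) ht₀ (by ring), by simp [x, hab]⟩
  have hS := hQc.snd_image_slice x
  calc t * (b.2 - a.2) = ((1 - t) • c + t • b).2 - ((1 - t) • c + t • a).2 := by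
        simp only [Prod.snd_add, Prod.smul_snd, smul_eq_mul]; ring
    _ ≤ sliceWidth Q x :=
        sub_le_sub (le_csSup hS.bddAbove (mem_image_of_mem _ hv))
          (csInf_le hS.bddBelow (mem_image_of_mem _ hu))

lemma Convex.snd_width_le_sliceWidth_div {Q : Set (ℝ × ℝ)} (hQc : IsCompact Q)
    (hQconv : Convex ℝ Q) {a b c : ℝ × ℝ} (ha : a ∈ Q) (hb : b ∈ Q) (hc : c ∈ Q)
    (hab : a.1 = b.1) (ha₂ : a.2 = sInf (Prod.snd '' Q)) (hb₂ : b.2 = sSup (Prod.snd '' Q))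
    {t m : ℝ} (ht₁ : t ≤ 1) (hm : 0 < m) (hmt : m ≤ t) :
    sSup (Prod.snd '' Q) - sInf (Prod.snd '' Q) ≤ sliceWidth Q ((1 - t) * c.1 + t * a.1) / m := by
  have hab₂ : 0 ≤ b.2 - a.2 :=
    sub_nonneg.2 (ha₂ ▸ csInf_le (hQc.image continuous_snd).bddBelow (mem_image_of_mem _ hb))
  rw [← ha₂, ← hb₂, le_div_iff₀ hm, mul_comm]
  calc m * (b.2 - a.2) ≤ t * (b.2 - a.2) := mul_le_mul_of_nonneg_right hmt hab₂
    _ ≤ _ := hQconv.mul_sub_snd_le_sliceWidth hQc ha hb hc hab (hm.trans_le hmt).le ht₁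

theorem stmt5_general (Q : Set (ℝ × ℝ)) (hQc : IsCompact Q)
    (hQconv : Convex ℝ Q)
    (p₁ p₂ : ℝ) (hp : p₁ < p₂) (hproj : Prod.fst '' Q = Set.Icc p₁ p₂)
    (l₁ l₂ : ℝ) (hl₁ : 0 < l₁) (hl₂ : 0 < l₂) (hl : l₁ + l₂ = 1)
    (p : ℝ) (hpdef : p = l₁ * p₁ + l₂ * p₂)
    (w₀ : ℝ)
    (hw₀ : sSup (Prod.snd '' {q ∈ Q | q.1 = p}) -
           sInf (Prod.snd '' {q ∈ Q | q.1 = p}) = w₀)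
    (hattain :
      (∃ a ∈ Q, ∃ b ∈ Q, a.1 = p₂ ∧ b.1 = p₂ ∧
        a.2 = sInf (Prod.snd '' Q) ∧ b.2 = sSup (Prod.snd '' Q)) ∨
      (∃ a ∈ Q, ∃ b ∈ Q, a.1 = p₁ ∧ b.1 = p₁ ∧
        a.2 = sInf (Prod.snd '' Q) ∧ b.2 = sSup (Prod.snd '' Q))) :
    sSup (Prod.snd '' Q) - sInf (Prod.snd '' Q) ≤ w₀ / min l₁ l₂ := by
  have hmin : 0 < min l₁ l₂ := lt_min hl₁ hl₂
  change sliceWidth Q p = w₀ at hw₀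
  subst hw₀
  rcases hattain with ⟨a, ha, b, hb, ha₁, hb₁, ha₂, hb₂⟩ | ⟨a, ha, b, hb, ha₁, hb₁, ha₂, hb₂⟩
  · obtain ⟨c, hc, hc₁⟩ : p₁ ∈ Prod.fst '' Q := hproj ▸ left_mem_Icc.2 hp.le
    have hpc : (1 - l₂) * c.1 + l₂ * a.1 = p := by
      rw [hpdef, hc₁, ha₁]; linear_combination (-p₁) * hl
    exact hpc ▸ hQconv.snd_width_le_sliceWidth_div hQc ha hb hc (ha₁.trans hb₁.symm) ha₂ hb₂
      (by linarith) hmin (min_le_right _ _)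
  · obtain ⟨c, hc, hc₁⟩ : p₂ ∈ Prod.fst '' Q := hproj ▸ right_mem_Icc.2 hp.le
    have hpc : (1 - l₁) * c.1 + l₁ * a.1 = p := by
      rw [hpdef, hc₁, ha₁]; linear_combination (-p₂) * hl
    exact hpc ▸ hQconv.snd_width_le_sliceWidth_div hQc ha hb hc (ha₁.trans hb₁.symm) ha₂ hb₂
      (by linarith) hmin (min_le_left _ _)

theorem stmt5 (Q : Set (ℝ × ℝ)) (hQne : Q.Nonempty) (hQc : IsCompact Q)
    (hQconv : Convex ℝ Q)
    (p₁ p₂ : ℝ) (hp : p₁ < p₂) (hproj : Prod.fst '' Q = Set.Icc p₁ p₂)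
    (l₁ l₂ : ℝ) (hl₁ : 0 < l₁) (hl₂ : 0 < l₂) (hl : l₁ + l₂ = 1)
    (p : ℝ) (hpdef : p = l₁ * p₁ + l₂ * p₂)
    (w₀ : ℝ)
    (hw₀ : sSup (Prod.snd '' {q ∈ Q | q.1 = p}) -
           sInf (Prod.snd '' {q ∈ Q | q.1 = p}) = w₀)
    (hattain :
      (∃ a ∈ Q, ∃ b ∈ Q, a.1 = p₂ ∧ b.1 = p₂ ∧
        a.2 = sInf (Prod.snd '' Q) ∧ b.2 = sSup (Prod.snd '' Q)) ∨
      (∃ a ∈ Q, ∃ b ∈ Q, a.1 = p₁ ∧ b.1 = p₁ ∧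
        a.2 = sInf (Prod.snd '' Q) ∧ b.2 = sSup (Prod.snd '' Q))) :
    sSup (Prod.snd '' Q) - sInf (Prod.snd '' Q) ≤ w₀ / min l₁ l₂ :=
  stmt5_general Q hQc hQconv p₁ p₂ hp hproj l₁ l₂ hl₁ hl₂ hl p hpdef w₀ hw₀ hattain
end
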